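/- The category F, whose objects are full embeddings j : A_τ ↪ A_λ of small categories and whose morphisms are commutative squares, is cartesian closed; the internal hom [B,C] has tight part [B,C]_τ = F(B,C) (morphisms of F from B to C) and loose part [B,C]_λ = Cat(B_λ, C_λ), with the evident inclusion. -/

import Mathlib

open CategoryTheory

universe u

/-- The property of being a full embedding: fully faithful and injective on objects. -/
def IsFullEmbedding (X : Arrow Cat.{u, u}) : Prop :=
  (X.hom.toFunctor : ↥X.left ⥤ ↥X.right).Full ∧ (X.hom.toFunctor : ↥X.left ⥤ ↥X.right).Faithful ∧
    Function.Injective (X.hom.toFunctor : ↥X.left ⥤ ↥X.right).obj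

/-- The category `F` of full embeddings. -/
abbrev FCat : Type (u + 1) := ObjectProperty.FullSubcategory IsFullEmbedding.{u}

/-- The hom-category `F(B, C)` of the 2-category `F`: objects are morphisms of `F`
from `B` to `C`, and 2-cells are natural transformations between the loose parts
(which uniquely determine the corresponding transformations between tight parts). -/
def FHom (B C : FCat.{u}) : Type u := B ⟶ C

instance (B C : FCat.{u}) : Category.{u} (FHom B C) :=
  InducedCategory.instCategory
    (F := fun f : B ⟶ C => (f.hom.right.toFunctor : ↥B.obj.right ⥤ ↥C.obj.right))

/-- The class `ChosenFiniteProducts` with its former meaning (a chosen limit cone for every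
binary product and a chosen terminal object). -/
class ChosenFiniteProducts (C : Type*) [Category C] where
  product : (X Y : C) → Limits.LimitCone (Limits.pair X Y)
  terminal : Limits.LimitCone (Functor.empty.{0} C)

/-- `CartesianClosed` with its former meaning: monoidal closed for the monoidal structure
induced by the chosen finite products. -/
abbrev CartesianClosed (C : Type*) [Category C] [ChosenFiniteProducts C] :=
  @MonoidalClosed C _ (CartesianMonoidalCategory.ofChosenFiniteProducts
    ChosenFiniteProducts.terminal ChosenFiniteProducts.product).toMonoidalCategory

/-! Because `j_C` is a full embedding, a morphism `A ⟶ C` of `F` is determined by its loose part,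
and a functor `A_λ ⥤ C_λ` is the loose part of such a morphism as soon as it sends the objects of
`A_τ` into `C_τ`. Hence products are computed componentwise, and morphisms `A × B ⟶ C` are the
functors `A_λ × B_λ ⥤ C_λ` sending `A_τ × B_τ` into `C_τ`. Currying turns these into the functors
`A_λ ⥤ (B_λ ⥤ C_λ)` sending each object of `A_τ` to the loose part of a morphism `B ⟶ C`, that is,
into the morphisms `A ⟶ [B, C]`, where `[B, C]_τ = F(B, C)` is fully embedded in `Cat(B_λ, C_λ)`
by taking loose parts. -/

open Limits

namespace CategoryTheory.Functor

variable {C D E W : Type*} [Category C] [Category D] [Category E] [Category W]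

theorem eq_of_comp_eq_of_faithful (G : D ⥤ E) [G.Faithful] (hG : Function.Injective G.obj)
    {F₁ F₂ : C ⥤ D} (h : F₁ ⋙ G = F₂ ⋙ G) : F₁ = F₂ :=
  Functor.ext (fun X => hG (congr_obj h X)) fun X Y f => G.map_injective (by
    simpa [eqToHom_map] using congr_hom h f)

noncomputable def liftOfFullyFaithful (G : D ⥤ E) [G.Full] [G.Faithful] (F : C ⥤ E)
    (hF : ∀ X, ∃ Y, G.obj Y = F.obj X) : C ⥤ D where
  obj X := (hF X).choose
  map {X Y} f :=
    G.preimage (eqToHom (hF X).choose_spec ≫ F.map f ≫ eqToHom (hF Y).choose_spec.symm)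
  map_id X := G.map_injective (by simp)
  map_comp f g := G.map_injective (by simp)

theorem liftOfFullyFaithful_comp (G : D ⥤ E) [G.Full] [G.Faithful] (F : C ⥤ E)
    (hF : ∀ X, ∃ Y, G.obj Y = F.obj X) : liftOfFullyFaithful G F hF ⋙ G = F :=
  Functor.ext (fun X => (hF X).choose_spec) fun X Y f => by simp [liftOfFullyFaithful]

theorem eq_prod' {P : W ⥤ C × D} {F : W ⥤ C} {G : W ⥤ D} (h₁ : P ⋙ Prod.fst C D = F)
    (h₂ : P ⋙ Prod.snd C D = G) : P = F.prod' G := by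
  subst h₁ h₂
  rfl

variable {F : C ⥤ D} {G : W ⥤ E}

instance [F.Full] [G.Full] : (F.prod G).Full where
  map_surjective f := ⟨(F.preimage f.1, G.preimage f.2), by simp⟩

instance [F.Faithful] [G.Faithful] : (F.prod G).Faithful where
  map_injective h := _root_.Prod.ext (F.map_injective (congrArg _root_.Prod.fst h))
    (G.map_injective (congrArg _root_.Prod.snd h))

theorem prod_obj_injective (hF : Function.Injective F.obj) (hG : Function.Injective G.obj) :
    Function.Injective (F.prod G).obj :=
  hF.prodMap hG

end CategoryTheory.Functor

namespace FCat

abbrev incl (A : FCat.{u}) : ↥A.obj.left ⥤ ↥A.obj.right := A.obj.hom.toFunctor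

instance (A : FCat.{u}) : A.incl.Full := A.property.1
instance (A : FCat.{u}) : A.incl.Faithful := A.property.2.1

def of {T L : Type u} [Category.{u} T] [Category.{u} L] (j : T ⥤ L) [j.Full] [j.Faithful]
    (hj : Function.Injective j.obj) : FCat.{u} :=
  ⟨Arrow.mk (X := Cat.of T) (Y := Cat.of L) j.toCatHom, ⟨‹_›, ‹_›, hj⟩⟩

variable {A B C X : FCat.{u}}

abbrev tight (f : A ⟶ C) : ↥A.obj.left ⥤ ↥C.obj.left := f.hom.left.toFunctor

abbrev loose (f : A ⟶ C) : ↥A.obj.right ⥤ ↥C.obj.right := f.hom.right.toFunctor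

theorem w (f : A ⟶ C) : tight f ⋙ C.incl = A.incl ⋙ loose f :=
  congrArg Cat.Hom.toFunctor f.hom.w

theorem w_obj (f : A ⟶ C) (a : ↥A.obj.left) :
    C.incl.obj ((tight f).obj a) = (loose f).obj (A.incl.obj a) :=
  Functor.congr_obj (w f) a

theorem hom_ext {f g : A ⟶ C} (h : loose f = loose g) : f = g := by
  refine ObjectProperty.hom_ext _ (CommaMorphism.ext (Cat.ext ?_) (Cat.ext h))
  refine Functor.eq_of_comp_eq_of_faithful C.incl C.property.2.2 ?_
  rw [w, w, h]

noncomputable def homMk (F : ↥A.obj.right ⥤ ↥C.obj.right)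
    (hF : ∀ a, ∃ c, C.incl.obj c = F.obj (A.incl.obj a)) : A ⟶ C :=
  ⟨{ left := (Functor.liftOfFullyFaithful C.incl (A.incl ⋙ F) hF).toCatHom
     right := F.toCatHom
     w := Cat.ext (Functor.liftOfFullyFaithful_comp C.incl (A.incl ⋙ F) hF) }⟩

def terminal : FCat.{u} :=
  of (𝟭 (Discrete PUnit.{u + 1})) Function.injective_id

noncomputable def isTerminal : IsTerminal terminal.{u} :=
  IsTerminal.ofUniqueHom (fun _ => homMk (Functor.star _) fun _ => ⟨⟨⟨⟩⟩, rfl⟩)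
    fun _ _ => hom_ext (Functor.punit_ext' _ _)

def prod (A B : FCat.{u}) : FCat.{u} :=
  of (A.incl.prod B.incl) (Functor.prod_obj_injective A.property.2.2 B.property.2.2)

noncomputable def fst (A B : FCat.{u}) : prod A B ⟶ A :=
  homMk (CategoryTheory.Prod.fst _ _) fun p => ⟨p.1, rfl⟩

noncomputable def snd (A B : FCat.{u}) : prod A B ⟶ B :=
  homMk (CategoryTheory.Prod.snd _ _) fun p => ⟨p.2, rfl⟩

noncomputable def lift (f : X ⟶ A) (g : X ⟶ B) : X ⟶ prod A B :=
  homMk ((loose f).prod' (loose g)) fun x =>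
    ⟨((tight f).obj x, (tight g).obj x), _root_.Prod.ext (w_obj f x) (w_obj g x)⟩

noncomputable def prodIsLimit (A B : FCat.{u}) : IsLimit (BinaryFan.mk (fst A B) (snd A B)) :=
  BinaryFan.isLimitMk (fun s => lift s.fst s.snd) (fun _ => hom_ext rfl) (fun _ => hom_ext rfl)
    fun _ _ h₁ h₂ => hom_ext (Functor.eq_prod' (congrArg loose h₁) (congrArg loose h₂))

noncomputable instance : ChosenFiniteProducts FCat.{u} where
  product A B := ⟨_, prodIsLimit A B⟩
  terminal := ⟨_, isTerminal⟩

def exp (B C : FCat.{u}) : FCat.{u} :=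
  of (inducedFunctor (fun f : B ⟶ C => loose f) : FHom B C ⥤ (↥B.obj.right ⥤ ↥C.obj.right))
    fun _ _ h => hom_ext h

noncomputable def curryHom (f : prod A B ⟶ C) : A ⟶ exp B C :=
  homMk (Functor.curry.obj (loose f)) fun a =>
    ⟨homMk ((Functor.curry.obj (loose f)).obj (A.incl.obj a)) fun b =>
      ⟨(tight f).obj (a, b), w_obj f (a, b)⟩, rfl⟩

noncomputable def uncurryHom (g : A ⟶ exp B C) : prod A B ⟶ C :=
  homMk (Functor.uncurry.obj (loose g)) fun p =>
    ⟨(tight ((tight g).obj p.1)).obj p.2,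
      (w_obj ((tight g).obj p.1) p.2).trans (Functor.congr_obj (w_obj g p.1) (B.incl.obj p.2))⟩

theorem uncurryHom_curryHom (f : prod A B ⟶ C) : uncurryHom (curryHom f) = f :=
  hom_ext (Functor.uncurry_obj_curry_obj (loose f))

theorem curryHom_uncurryHom (g : A ⟶ exp B C) : curryHom (uncurryHom g) = g :=
  hom_ext (Functor.curry_obj_uncurry_obj (loose g))

noncomputable def curryEquiv (A B C : FCat.{u}) : (prod A B ⟶ C) ≃ (A ⟶ exp B C) where
  toFun := curryHom
  invFun := uncurryHom
  left_inv := uncurryHom_curryHom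
  right_inv := curryHom_uncurryHom

theorem uncurryHom_comp (f : X ⟶ A) (g : A ⟶ exp B C) :
    uncurryHom (f ≫ g) = lift (fst X B ≫ f) (snd X B) ≫ uncurryHom g :=
  hom_ext rfl

noncomputable def ev (B C : FCat.{u}) : prod (exp B C) B ⟶ C :=
  uncurryHom (𝟙 _)

theorem lift_comp_ev (g : A ⟶ exp B C) :
    lift (fst A B ≫ g) (snd A B) ≫ ev B C = uncurryHom g := by
  rw [ev, ← uncurryHom_comp, Category.comp_id]

theorem curryHom_comp (f : X ⟶ A) (g : prod A B ⟶ C) :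
    curryHom (lift (fst X B ≫ f) (snd X B) ≫ g) = f ≫ curryHom g := by
  rw [← curryHom_uncurryHom (f ≫ curryHom g), uncurryHom_comp, uncurryHom_curryHom]

noncomputable instance : CartesianMonoidalCategory FCat.{u} :=
  .ofChosenFiniteProducts ChosenFiniteProducts.terminal ChosenFiniteProducts.product

attribute [local instance] BraidedCategory.ofCartesianMonoidalCategory

/- `MonoidalClosed` asks for a right adjoint of `B ⊗ -`, whereas currying transposes along
`- ⊗ B`; the braiding of the cartesian structure identifies the two. -/
noncomputable instance : CartesianClosed FCat.{u} where
  closed B :=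
    { rightAdj := _
      adj := (Adjunction.adjunctionOfEquivRight (F := MonoidalCategory.tensorRight B)
        (fun X Y => curryEquiv X B Y) fun _ _ _ f g => curryHom_comp f g).ofNatIsoLeft
          (BraidedCategory.tensorLeftIsoTensorRight B).symm }

end FCat

/-- The category `F` of full embeddings is cartesian closed, and the
internal hom `[B, C]` has tight part (isomorphic to) the hom-category `F(B, C)` and
loose part (isomorphic to) the functor category `Cat(B_λ, C_λ)`. -/
theorem FCat_cartesianClosed_internal_hom :
    ∃ cfp : ChosenFiniteProducts FCat.{u},
      Nonempty (@CartesianClosed FCat.{u} _ cfp) ∧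
      ∀ B C : FCat.{u}, ∃ (E : FCat.{u})
        (ev : (cfp.product E B).cone.pt ⟶ C),
        (∀ (A : FCat.{u}) (fm : (cfp.product A B).cone.pt ⟶ C),
          ∃! gm : A ⟶ E,
            (cfp.product E B).isLimit.lift
                (Limits.BinaryFan.mk
                  (Limits.BinaryFan.fst (cfp.product A B).cone ≫ gm)
                  (Limits.BinaryFan.snd (cfp.product A B).cone)) ≫ ev = fm) ∧
        Nonempty ((E.obj.left : Cat.{u, u}) ≅ Cat.of (FHom B C)) ∧
        Nonempty ((E.obj.right : Cat.{u, u}) ≅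
          Cat.of (↥B.obj.right ⥤ ↥C.obj.right)) := by
  refine ⟨inferInstance, ⟨inferInstance⟩, fun B C =>
    ⟨FCat.exp B C, FCat.ev B C, fun A fm => ?_, ⟨Iso.refl _⟩, ⟨Iso.refl _⟩⟩⟩
  exact (existsUnique_congr fun gm => Eq.congr_left (FCat.lift_comp_ev gm)).2
    ((FCat.curryEquiv A B C).symm.bijective.existsUnique fm)
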